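/- arXiv:1209.1782 — 2 statements merged into one kernel-verified Lean document; each statement's English description precedes it below -/
import Mathlib

section
/- For constants ε, ν, μ with μ ≠ 0, the function u(x,t) = (−6ν²/(25εμ))·[1 + tanh(k(x + ct)) − (1/2)·sech²(k(x + ct))] with k = ν/(10μ) and c = 6ν²/(25μ) satisfies the KdV–Burgers equation u_t + ε·u·u_x − ν·u_xx + μ·u_xxx = 0 for all real x and t. (In the special case ε = 1 this is the stated traveling-wave solution u = (−6ν²/(25μ))[1 + tanh(k(x+ct)) − ½sech²(k(x+ct))].) -/
/-!
The profile `1 + tanh z - ½ sech² z` equals `(1 + tanh z)² / 2`, a polynomial in `tanh z`.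
Since `tanh' = 1 - tanh²`, every derivative of a polynomial in `tanh` is again one, and the
`n`-th space derivative (resp. the time derivative) of a wave `f (k (x + c t))` is `kⁿ f⁽ⁿ⁾`
(resp. `k c f'`). The equation therefore reduces to a polynomial identity in `tanh (k (x + c t))`.
-/

open Real Polynomial

namespace Real

theorem one_div_cosh_sq (z : ℝ) : (1 / cosh z) ^ 2 = 1 - tanh z ^ 2 := by
  have := cosh_sq_sub_sinh_sq z
  rw [tanh_eq_sinh_div_cosh]
  field_simp
  linarith

theorem one_add_tanh_sub_half_one_div_cosh_sq (z : ℝ) :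
    1 + tanh z - 1 / 2 * (1 / cosh z) ^ 2 = (1 + tanh z) ^ 2 / 2 := by
  rw [one_div_cosh_sq]
  ring

theorem hasDerivAt_tanh (z : ℝ) : HasDerivAt tanh (1 - tanh z ^ 2) z := by
  have h := (hasDerivAt_sinh z).div (hasDerivAt_cosh z) (cosh_pos z).ne'
  rw [← one_div_cosh_sq, one_div_pow, ← cosh_sq_sub_sinh_sq z,
    show tanh = sinh / cosh from _root_.funext tanh_eq_sinh_div_cosh]
  simpa only [← sq] using h

theorem contDiff_tanh {n : WithTop ℕ∞} : ContDiff ℝ n tanh := by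
  rw [show tanh = sinh / cosh from _root_.funext tanh_eq_sinh_div_cosh]
  exact contDiff_sinh.div contDiff_cosh fun z => (cosh_pos z).ne'

end Real

noncomputable def tanhDerivative (P : ℝ[X]) : ℝ[X] := derivative P * (1 - X ^ 2)

theorem hasDerivAt_eval_tanh (P : ℝ[X]) (z : ℝ) :
    HasDerivAt (fun z => P.eval (tanh z)) ((tanhDerivative P).eval (tanh z)) z := by
  rw [tanhDerivative, eval_mul, eval_sub, eval_one, eval_pow, eval_X]
  exact (P.hasDerivAt (tanh z)).comp z (hasDerivAt_tanh z)

theorem iteratedDeriv_eval_tanh (n : ℕ) (P : ℝ[X]) :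
    iteratedDeriv n (fun z => P.eval (tanh z)) =
      fun z => (tanhDerivative^[n] P).eval (tanh z) := by
  induction n generalizing P with
  | zero => rfl
  | succ n ih =>
    have h : deriv (fun z => P.eval (tanh z)) = fun z => (tanhDerivative P).eval (tanh z) :=
      funext fun z => (hasDerivAt_eval_tanh P z).deriv
    rw [iteratedDeriv_succ', h, ih, Function.iterate_succ_apply]

theorem contDiff_eval_tanh (P : ℝ[X]) {n : WithTop ℕ∞} :
    ContDiff ℝ n fun z => P.eval (tanh z) := by
  have h : ContDiff ℝ n fun x : ℝ => aeval x P := contDiff_aeval P n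
  simp only [coe_aeval_eq_eval] at h
  exact h.comp contDiff_tanh

section TravelingWave

variable {𝕜 : Type*} [NontriviallyNormedField 𝕜] {f : 𝕜 → 𝕜}

theorem iteratedDeriv_comp_mul_add_const {n : ℕ} (hf : ContDiff 𝕜 n f) (k a x : 𝕜) :
    iteratedDeriv n (fun y => f (k * (y + a))) x = k ^ n * iteratedDeriv n f (k * (x + a)) := by
  rw [iteratedDeriv_comp_add_const n (fun y => f (k * y)) a, iteratedDeriv_comp_const_mul hf]

theorem deriv_comp_mul_add_mul {x t : 𝕜} (k c : 𝕜)
    (hf : DifferentiableAt 𝕜 f (k * (x + c * t))) :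
    deriv (fun s => f (k * (x + c * s))) t = k * c * deriv f (k * (x + c * t)) := by
  have h : HasDerivAt (fun s => k * (x + c * s)) (k * c) t := by
    simpa using (((hasDerivAt_id t).const_mul c).const_add x).const_mul k
  rw [← mul_comm, ← (hf.hasDerivAt.comp t h).deriv]
  rfl

end TravelingWave

theorem kdvb_traveling_wave_solution_general
    (ε ν μ : ℝ)
    (u : ℝ → ℝ → ℝ)
    (hu : ∀ x t, u x t =
      (-6 * ν^2 / (25 * ε * μ)) *
        (1 + Real.tanh ((ν / (10 * μ)) * (x + (6 * ν^2 / (25 * μ)) * t))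
           - (1/2) * (1 / Real.cosh ((ν / (10 * μ)) * (x + (6 * ν^2 / (25 * μ)) * t)))^2)) :
    ∀ x t : ℝ,
      deriv (fun s => u x s) t
        + ε * u x t * deriv (fun y => u y t) x
        - ν * iteratedDeriv 2 (fun y => u y t) x
        + μ * iteratedDeriv 3 (fun y => u y t) x = 0 := by
  intro x t
  set A := -6 * ν ^ 2 / (25 * ε * μ) with hA
  set k := ν / (10 * μ) with hk
  set c := 6 * ν ^ 2 / (25 * μ) with hc
  set P : ℝ[X] := (1 + X) ^ 2
  have hwave : u = fun y s => A / 2 * P.eval (tanh (k * (y + c * s))) := by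
    ext y s
    rw [hu, one_add_tanh_sub_half_one_div_cosh_sq]
    simp only [P, eval_pow, eval_add, eval_one, eval_X]
    ring
  have hP : ContDiff ℝ ⊤ fun z => P.eval (tanh z) := contDiff_eval_tanh P
  simp only [hwave, deriv_const_mul_field', iteratedDeriv_const_mul_field]
  rw [deriv_comp_mul_add_mul k c (hP.differentiable (by simp) _),
    ← iteratedDeriv_one, ← iteratedDeriv_one,
    iteratedDeriv_comp_mul_add_const (hP.of_le (by simp)),
    iteratedDeriv_comp_mul_add_const (hP.of_le (by simp)),
    iteratedDeriv_comp_mul_add_const (hP.of_le (by simp))]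
  simp only [iteratedDeriv_eval_tanh]
  simp only [P, tanhDerivative, Function.iterate_succ_apply', Function.iterate_zero_apply,
    derivative_mul, derivative_sq, derivative_add, derivative_sub, derivative_zero,
    derivative_one, derivative_X, derivative_C, eval_mul, eval_add, eval_sub, eval_pow,
    eval_zero, eval_one, eval_X, eval_C]
  generalize tanh (k * (x + c * t)) = T
  rcases eq_or_ne (ε * μ) 0 with hεμ | hεμ
  · -- the amplitude is then a division by zero, hence `0`
    have hA0 : A = 0 := by rw [hA, mul_assoc, hεμ, mul_zero, div_zero]
    simp [hA0]
  · obtain ⟨hε, hμ⟩ := mul_ne_zero_iff.mp hεμ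
    rw [hA, hk, hc]
    field_simp
    ring

/-- The traveling wave u(x,t) = (−6ν²/(25εμ))·[1 + tanh(k(x+ct)) − ½sech²(k(x+ct))],
    with k = ν/(10μ), c = 6ν²/(25μ), satisfies the KdV–Burgers equation
    u_t + ε u u_x − ν u_xx + μ u_xxx = 0. -/
theorem kdvb_traveling_wave_solution
    (ε ν μ : ℝ) (hμ : μ ≠ 0)
    (u : ℝ → ℝ → ℝ)
    (hu : ∀ x t, u x t =
      (-6 * ν^2 / (25 * ε * μ)) *
        (1 + Real.tanh ((ν / (10 * μ)) * (x + (6 * ν^2 / (25 * μ)) * t))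
           - (1/2) * (1 / Real.cosh ((ν / (10 * μ)) * (x + (6 * ν^2 / (25 * μ)) * t)))^2)) :
    ∀ x t : ℝ,
      deriv (fun s => u x s) t
        + ε * u x t * deriv (fun y => u y t) x
        - ν * iteratedDeriv 2 (fun y => u y t) x
        + μ * iteratedDeriv 3 (fun y => u y t) x = 0 :=
  kdvb_traveling_wave_solution_general ε ν μ u hu
end

section
/- For h > 0 and integers i ≠ j, the third derivative of S(j,h)(x) = sinc((x − jh)/h) at x = ih equals (1/h³)·(−1)^(i−j)/(i−j)³·(6 − π²(i−j)²), and at x = jh the third derivative equals 0. -/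
/-!
Write `F x = sinc ((x - b) / h)` with `b = j h`. Away from `b`, `F` is smooth and
`(x - b) F x = (h / π) sin (π (x - b) / h)` holds everywhere, so Leibniz' rule gives the
recurrence `(x - b) F⁽ⁿ⁺¹⁾ + (n + 1) F⁽ⁿ⁾ = (h / π) (π / h)ⁿ⁺¹ sin⁽ⁿ⁺¹⁾ (π (x - b) / h)`.
At a node `x - b = k h` with `k ≠ 0` the sine derivatives are `0` or `±(-1)ᵏ` and `F x = 0`,
so the recurrence determines `F'`, `F''`, `F'''` in turn. At `x = b` the function `F` is even
about `b`, so all its odd derivatives there vanish.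
-/

open Real Topology Filter

section IteratedDeriv

variable {𝕜 : Type*} [NontriviallyNormedField 𝕜]

lemma iteratedDeriv_add_two_sub_const (b x : 𝕜) (k : ℕ) :
    iteratedDeriv (k + 2) (fun y => y - b) x = 0 := by
  have h := congrFun (iteratedDeriv_comp_sub_const (k + 2) id b) x
  simpa only [id_eq, iteratedDeriv_id, Nat.add_eq_zero_iff, OfNat.ofNat_ne_zero, and_false, ↓reduceIte,
    Nat.reduceEqDiff] using h

lemma iteratedDeriv_succ_sub_const_mul {f : 𝕜 → 𝕜} {x : 𝕜} (b : 𝕜) (n : ℕ)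
    (hf : ContDiffAt 𝕜 (n + 1) f x) :
    iteratedDeriv (n + 1) (fun y => (y - b) * f y) x
      = (x - b) * iteratedDeriv (n + 1) f x + (n + 1) * iteratedDeriv n f x := by
  rw [iteratedDeriv_fun_mul (by fun_prop) hf, Finset.sum_range_succ', Finset.sum_range_succ']
  simp only [iteratedDeriv_add_two_sub_const, mul_zero, zero_mul, Finset.sum_const_zero, zero_add,
    Nat.choose_one_right, Nat.cast_add, Nat.cast_one, iteratedDeriv_one, differentiableAt_fun_id,
    differentiableAt_const, deriv_fun_sub, deriv_id'', deriv_const', sub_zero, mul_one,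
    add_tsub_cancel_right, Nat.choose_zero_right, iteratedDeriv_zero, one_mul, tsub_zero]
  ring

lemma iteratedDeriv_eq_zero_of_odd_of_symm {F : Type*} [NormedAddCommGroup F] [NormedSpace 𝕜 F]
    [IsAddTorsionFree F] {f : 𝕜 → F} {a : 𝕜} (hf : ∀ y, f (a - y) = f (a + y)) {n : ℕ}
    (hn : Odd n) : iteratedDeriv n f a = 0 := by
  have hreflect : (fun z => f (2 * a - z)) = f := funext fun z => by
    simpa [two_mul, sub_sub_eq_add_sub, add_sub_assoc] using hf (z - a)
  have h := congrFun (iteratedDeriv_comp_const_sub n f (2 * a)) a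
  rw [hreflect, hn.neg_one_pow, two_mul, add_sub_cancel_right, neg_one_smul] at h
  exact self_eq_neg.mp h

end IteratedDeriv

lemma iteratedDeriv_sin_const_mul_sub (n : ℕ) (c b x : ℝ) :
    iteratedDeriv n (fun y => sin (c * (y - b))) x = c ^ n * iteratedDeriv n sin (c * (x - b)) := by
  rw [iteratedDeriv_comp_sub_const n (fun y => sin (c * y)),
    iteratedDeriv_comp_const_mul contDiff_sin c]

section Sinc

variable {s : ℝ → ℝ} (hs : ∀ x, x ≠ 0 → s x = sin (π * x) / (π * x))
include hs

lemma sinc_apply_neg (x : ℝ) : s (-x) = s x := by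
  rcases eq_or_ne x 0 with rfl | hx
  · rw [neg_zero]
  rw [hs x hx, hs (-x) (neg_ne_zero.2 hx), mul_neg, sin_neg, neg_div_neg_eq]

variable {h : ℝ} (hh : h ≠ 0) (b : ℝ)
include hh

lemma sub_mul_sinc_div (x : ℝ) : (x - b) * s ((x - b) / h) = h / π * sin (π / h * (x - b)) := by
  rcases eq_or_ne x b with rfl | hx
  · simp
  rw [hs _ (div_ne_zero (sub_ne_zero.2 hx) hh)]
  field_simp

lemma contDiffAt_sinc_div {x : ℝ} (hx : x ≠ b) (n : WithTop ℕ∞) :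
    ContDiffAt ℝ n (fun y => s ((y - b) / h)) x := by
  have hev : (fun y => s ((y - b) / h))
      =ᶠ[𝓝 x] fun y => sin (π * ((y - b) / h)) / (π * ((y - b) / h)) :=
    (eventually_ne_nhds hx).mono fun y hy => hs _ (div_ne_zero (sub_ne_zero.2 hy) hh)
  refine ContDiffAt.congr_of_eventuallyEq ?_ hev
  have hden : π * ((x - b) / h) ≠ 0 := mul_ne_zero pi_ne_zero (div_ne_zero (sub_ne_zero.2 hx) hh)
  fun_prop (disch := exact hden)

lemma sub_mul_iteratedDeriv_sinc_div_succ {x : ℝ} (hx : x ≠ b) (n : ℕ) :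
    (x - b) * iteratedDeriv (n + 1) (fun y => s ((y - b) / h)) x
        + (n + 1) * iteratedDeriv n (fun y => s ((y - b) / h)) x
      = h / π * (π / h) ^ (n + 1) * iteratedDeriv (n + 1) sin (π / h * (x - b)) := by
  rw [← iteratedDeriv_succ_sub_const_mul b n (contDiffAt_sinc_div hs hh b hx _),
    funext (sub_mul_sinc_div hs hh b), iteratedDeriv_const_mul_field,
    iteratedDeriv_sin_const_mul_sub, mul_assoc]

lemma iteratedDeriv_three_sinc_div_of_sub_eq_int_mul {x : ℝ} {k : ℤ} (hk : k ≠ 0)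
    (hx : x - b = k * h) :
    iteratedDeriv 3 (fun y => s ((y - b) / h)) x
      = 1 / h ^ 3 * ((-1 : ℝ) ^ k / (k : ℝ) ^ 3) * (6 - π ^ 2 * (k : ℝ) ^ 2) := by
  have hk' : (k : ℝ) ≠ 0 := Int.cast_ne_zero.2 hk
  have hxb : x ≠ b := sub_ne_zero.1 (hx ▸ mul_ne_zero hk' hh)
  have hnode : π / h * (x - b) = k * π := by rw [hx]; field_simp
  have hD0 : iteratedDeriv 0 (fun y => s ((y - b) / h)) x = 0 := by
    rw [iteratedDeriv_zero, hx, mul_div_cancel_right₀ _ hh, hs _ hk', mul_comm, sin_int_mul_pi,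
      zero_div]
  have hsin1 : iteratedDeriv 1 sin (k * π) = (-1) ^ k := by simp [cos_int_mul_pi]
  have hsin2 : iteratedDeriv 2 sin (k * π) = 0 := by simp [iteratedDeriv_succ, sin_int_mul_pi]
  have hsin3 : iteratedDeriv 3 sin (k * π) = -(-1) ^ k := by
    simp [iteratedDeriv_succ, cos_int_mul_pi]
  have R0 := sub_mul_iteratedDeriv_sinc_div_succ hs hh b hxb 0
  have R1 := sub_mul_iteratedDeriv_sinc_div_succ hs hh b hxb 1
  have R2 := sub_mul_iteratedDeriv_sinc_div_succ hs hh b hxb 2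
  rw [hnode, hx] at R0 R1 R2
  rw [hsin1, hD0] at R0
  rw [hsin2] at R1
  rw [hsin3] at R2
  norm_num at R0 R1 R2
  field_simp at R0 R1 R2 ⊢
  linear_combination (k : ℝ) ^ 2 * R2 - 3 * k * h * R1 + 6 * R0

end Sinc

theorem sinc_translate_third_deriv_at_nodes_general
    (sinc : ℝ → ℝ)
    (hsinc : ∀ x : ℝ, x ≠ 0 → sinc x = Real.sin (Real.pi * x) / (Real.pi * x))
    (h : ℝ) (hh : h > 0) (j : ℤ) :
    (∀ i : ℤ, i ≠ j →
      iteratedDeriv 3 (fun x : ℝ => sinc ((x - (j : ℝ) * h) / h)) ((i : ℝ) * h)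
        = (1 / h ^ 3) * ((-1 : ℝ) ^ (i - j) / ((i : ℝ) - (j : ℝ)) ^ 3)
            * (6 - Real.pi ^ 2 * ((i : ℝ) - (j : ℝ)) ^ 2))
      ∧ iteratedDeriv 3 (fun x : ℝ => sinc ((x - (j : ℝ) * h) / h)) ((j : ℝ) * h) = 0 := by
  refine ⟨fun i hij => ?_, ?_⟩
  · have hnode := iteratedDeriv_three_sinc_div_of_sub_eq_int_mul hsinc hh.ne' ((j : ℝ) * h)
      (sub_ne_zero.2 hij) (x := i * h) (by push_cast; ring)
    push_cast at hnode
    exact hnode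
  · refine iteratedDeriv_eq_zero_of_odd_of_symm (fun y => ?_) (by decide)
    rw [sub_sub_cancel_left, add_sub_cancel_left, neg_div, sinc_apply_neg hsinc]

/-- Third derivative of S(j,h)(x) = sinc((x − jh)/h) at the nodes:
    (1/h³)·(−1)^(i−j)/(i−j)³·(6 − π²(i−j)²) at x = ih for i ≠ j, and 0 at x = jh. -/
theorem sinc_translate_third_deriv_at_nodes
    (sinc : ℝ → ℝ)
    (hsinc : ∀ x : ℝ, x ≠ 0 → sinc x = Real.sin (Real.pi * x) / (Real.pi * x))
    (hsinc0 : sinc 0 = 1)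
    (h : ℝ) (hh : h > 0) (j : ℤ) :
    (∀ i : ℤ, i ≠ j →
      iteratedDeriv 3 (fun x : ℝ => sinc ((x - (j : ℝ) * h) / h)) ((i : ℝ) * h)
        = (1 / h ^ 3) * ((-1 : ℝ) ^ (i - j) / ((i : ℝ) - (j : ℝ)) ^ 3)
            * (6 - Real.pi ^ 2 * ((i : ℝ) - (j : ℝ)) ^ 2))
      ∧ iteratedDeriv 3 (fun x : ℝ => sinc ((x - (j : ℝ) * h) / h)) ((j : ℝ) * h) = 0 :=
  sinc_translate_third_deriv_at_nodes_general sinc hsinc h hh j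
end
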